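/- arXiv:1802.04829 — 2 statements merged into one kernel-verified Lean document; each statement's English description precedes it below -/
import Mathlib

section
/- Let (e_α)_{α<ω₁} be a family such that for each infinite α < ω₁, e_α : ℕ → α is a bijection. Let (x_α)_{α<ω₁} be subsets of ℕ, and for infinite α define c(α) = { min( x_α \ ⋃_{k<n} x_{e_α(k)} ) : n ∈ ℕ, x_α \ ⋃_{k<n} x_{e_α(k)} is nonempty }. Assume that for every infinite α and every n, the set x_α \ ⋃_{k<n} x_{e_α(k)} is infinite. Then for all infinite α < β < ω₁, the intersection c(α) ∩ c(β) is finite. -/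
open Ordinal Cardinal

/-- the almost-disjoint family construction. Given bijections
`e α : ℕ → {β | β < α}` for infinite `α < ω₁` and sets `x α ⊆ ℕ`, with
`c α = { min (x α \ ⋃_{k<n} x (e α k)) : n ∈ ℕ }`, if each set
`x α \ ⋃_{k<n} x (e α k)` is infinite, then `c α ∩ c β` is finite for
infinite `α < β < ω₁`. -/
theorem stmt_8
    (x : Ordinal.{0} → Set ℕ)
    (e : Ordinal.{0} → ℕ → Ordinal.{0})
    (hbij : ∀ α : Ordinal.{0}, omega0 ≤ α → α < (aleph 1).ord →
      (∀ n, e α n < α) ∧ Function.Injective (e α) ∧ ∀ β < α, ∃ n, e α n = β)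
    (hinf : ∀ α : Ordinal.{0}, omega0 ≤ α → α < (aleph 1).ord →
      ∀ n : ℕ, (x α \ ⋃ k < n, x (e α k)).Infinite)
    (c : Ordinal.{0} → Set ℕ)
    (hc : ∀ α : Ordinal.{0}, omega0 ≤ α → α < (aleph 1).ord →
      c α = {m | ∃ n : ℕ, m = sInf (x α \ ⋃ k < n, x (e α k))}) :
    ∀ α β : Ordinal.{0}, omega0 ≤ α → α < β → β < (aleph 1).ord →
      (c α ∩ c β).Finite := by
  intro α β hα hαβ hβ1
  have hα1 : α < (aleph 1).ord := hαβ.trans hβ1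
  have hβ : omega0 ≤ β := hα.trans hαβ.le
  obtain ⟨k₀, hk₀⟩ := (hbij β hβ hβ1).2.2 α hαβ
  have hsub : c α ∩ c β ⊆
      (fun n => sInf (x β \ ⋃ k < n, x (e β k))) '' (Set.Iic k₀) := by
    rintro m ⟨hmα, hmβ⟩
    rw [hc β hβ hβ1] at hmβ
    obtain ⟨n, hn⟩ := hmβ
    -- m ∈ x α
    have hmxα : m ∈ x α := by
      rw [hc α hα hα1] at hmα
      obtain ⟨p, hp⟩ := hmα
      have hne := (hinf α hα hα1 p).nonempty
      have := Nat.sInf_mem hne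
      rw [← hp] at this
      exact this.1
    -- m ∈ S_n
    have hmem := Nat.sInf_mem (hinf β hβ hβ1 n).nonempty
    rw [← hn] at hmem
    refine ⟨n, ?_, hn.symm⟩
    by_contra h
    rw [Set.mem_Iic, not_le] at h
    exact hmem.2 (Set.mem_biUnion h (hk₀ ▸ hmxα))
  exact ((Set.finite_Iic k₀).image _).subset hsub
end

section
/- Let D be a Ramsey ultrafilter on ℕ and ρ : ℕ^{<ω} → ω₁ a function such that for every t with ρ(t) > 0, ρ(t) is the minimal ordinal α > 0 such that { k ∈ ℕ : ρ(t⌢k) < α } ∈ D⁺. Then for each t with ρ(t) a limit ordinal or successor with ρ(t) > 0, there is D_t ∈ D such that the sequence ( ρ(t⌢k) )_{k ∈ D_t} is (weakly) increasing and, if ρ(t) is a limit, cofinal in ρ(t). -/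
open Ordinal Cardinal

/-! If `k ↦ ρ(t⌢k)` stayed below some `β < ρ t` on a set of `D`, then `β` would be a smaller
positive ordinal witnessing the minimality condition defining `ρ t`. Hence on any set of `D`
these values are cofinal below `ρ t`; the Ramsey property supplies a set of `D` on which they
are constant or strictly increasing, in particular weakly increasing. -/

theorem Filter.exists_mem_le_of_lt_of_forall_eventually_lt {ι : Type*} {l : Filter ι} [l.NeBot]
    {g : ι → Ordinal} {γ : Ordinal} (hmin : ∀ α, 0 < α → (∀ᶠ k in l, g k < α) → γ ≤ α)
    {A : Set ι} (hA : A ∈ l) {β : Ordinal} (hβ : β < γ) : ∃ k ∈ A, β ≤ g k := by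
  by_contra! hbelow
  obtain ⟨k, hk⟩ := l.nonempty_of_mem hA
  have hβpos : 0 < β := zero_le.trans_lt (hbelow k hk)
  exact hβ.not_ge (hmin β hβpos (l.mem_of_superset hA hbelow))

theorem stmt_9_general (D : Ultrafilter ℕ)
    (hRamsey : ∀ f : ℕ → Ordinal.{0}, ∃ A ∈ D,
      (∀ m ∈ A, ∀ n ∈ A, f m = f n) ∨ (∀ m ∈ A, ∀ n ∈ A, m < n → f m < f n))
    (ρ : List ℕ → Ordinal.{0})
    (hrank : ∀ t : List ℕ, 0 < ρ t →
      ({k : ℕ | ρ (t ++ [k]) < ρ t} ∈ D ∧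
        ∀ α : Ordinal.{0}, 0 < α → {k : ℕ | ρ (t ++ [k]) < α} ∈ D → ρ t ≤ α)) :
    ∀ t : List ℕ, 0 < ρ t → ∃ Dt ∈ D,
      (∀ m ∈ Dt, ∀ n ∈ Dt, m ≤ n → ρ (t ++ [m]) ≤ ρ (t ++ [n])) ∧
      (Order.IsSuccLimit (ρ t) → ∀ β < ρ t, ∃ k ∈ Dt, β ≤ ρ (t ++ [k])) := by
  intro t ht
  obtain ⟨A, hA, hmono⟩ : ∃ A ∈ D, MonotoneOn (fun k => ρ (t ++ [k])) A := by
    obtain ⟨A, hA, hconst | hstrict⟩ := hRamsey fun k => ρ (t ++ [k])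
    · exact ⟨A, hA, fun m hm n hn _ => (hconst m hm n hn).le⟩
    · exact ⟨A, hA, StrictMonoOn.monotoneOn hstrict⟩
  exact ⟨A, hA, hmono, fun _ _ hβ =>
    Filter.exists_mem_le_of_lt_of_forall_eventually_lt (hrank t ht).2 hA hβ⟩

/-- for a Ramsey ultrafilter `D` and a rank function
`ρ : ℕ^{<ω} → ω₁` such that `ρ t`, when positive, is the least `α > 0` with
`{k : ρ(t⌢k) < α} ∈ D`, every `t` with `ρ t > 0` admits `D_t ∈ D` on which
`k ↦ ρ(t⌢k)` is weakly increasing and, when `ρ t` is a limit, cofinal in `ρ t`. -/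
theorem stmt_9 (D : Ultrafilter ℕ)
    (hRamsey : ∀ f : ℕ → Ordinal.{0}, ∃ A ∈ D,
      (∀ m ∈ A, ∀ n ∈ A, f m = f n) ∨ (∀ m ∈ A, ∀ n ∈ A, m < n → f m < f n))
    (ρ : List ℕ → Ordinal.{0})
    (hω₁ : ∀ t, ρ t < (aleph 1).ord)
    (hrank : ∀ t : List ℕ, 0 < ρ t →
      ({k : ℕ | ρ (t ++ [k]) < ρ t} ∈ D ∧
        ∀ α : Ordinal.{0}, 0 < α → {k : ℕ | ρ (t ++ [k]) < α} ∈ D → ρ t ≤ α)) :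
    ∀ t : List ℕ, 0 < ρ t → ∃ Dt ∈ D,
      (∀ m ∈ Dt, ∀ n ∈ Dt, m ≤ n → ρ (t ++ [m]) ≤ ρ (t ++ [n])) ∧
      (Order.IsSuccLimit (ρ t) → ∀ β < ρ t, ∃ k ∈ Dt, β ≤ ρ (t ++ [k])) :=
  stmt_9_general D hRamsey ρ hrank
end
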